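/- Let y ∈ Y = closure(Φ(X)) be such that y is neither forward-asymptotic nor backward-asymptotic to the all-β fixed point (i.e., for all i > 0 the right tail (y)_i^∞ ≠ β^∞ and for all j < 0 the left tail (y)_{-∞}^j ≠ β^∞). Then y ∈ Φ(X). -/

import Mathlib

/-!
Reading the first `i` digits of `x` as the number `DN i x`, the odometer adds one modulo `2 ^ i`,
so `Φ(x)_n = β` iff `(DN i x + n) % 2 ^ i < i` for some `i ≥ 5`: level `i` contributes runs of
`i` consecutive `β`'s. By compactness of `X`, `y ∈ Y` gives an `x` with `(x, y)` in the closure of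
the graph of `Φ`. A `β` of `Φ(x)` is witnessed by finitely many digits, so it is also a `β` of `y`.
If instead `Φ(x)_n = α` but `y_n = β`, then points `x'` close to `x` with `Φ(x')` close to `y` can
only see that `β` through a level `i > 2N`, whose run through `n` covers `[n, n + N]` or
`[n - N, n]`; letting `N → ∞` gives `y` a one-sided tail of `β`'s.
-/

open MeasureTheory Filter Topology
open scoped ENNReal

/-- The odometer map on `X = {0,1}^ℕ` (adding one with carry in binary). -/
def Tod (x : ℕ → Bool) : ℕ → Bool := fun k =>
  if ∀ i < k, x i = true then !(x k) else x k

/-- The inverse of the odometer map (subtracting one with borrow). -/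
def TodInv (x : ℕ → Bool) : ℕ → Bool := fun k =>
  if ∀ i < k, x i = false then !(x k) else x k

/-- The number determined by the first `k` binary digits of `x`. -/
def DN (k : ℕ) (x : ℕ → Bool) : ℕ := ∑ i ∈ Finset.range k, 2 ^ i * (x i).toNat

/-- The cylinder `[0^i]` of sequences starting with `i` zeros. -/
def cyl0 (i : ℕ) : Set (ℕ → Bool) := {x | ∀ j < i, x j = false}

/-- `A = ⋃_{i=5}^∞ ⋃_{j=0}^{i-1} T^j([0^i])`. -/
def Aset : Set (ℕ → Bool) := ⋃ (i : ℕ) (_ : 5 ≤ i) (j : ℕ) (_ : j < i), Tod^[j] '' cyl0 i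

/-- `A_k = ⋃_{i=5}^{k} ⋃_{j=0}^{i-1} T^j([0^i])`. -/
def Ak (k : ℕ) : Set (ℕ → Bool) :=
  ⋃ (i : ℕ) (_ : 5 ≤ i) (_ : i ≤ k) (j : ℕ) (_ : j < i), Tod^[j] '' cyl0 i

/-- `E_k = ⋃_{i=k+1}^∞ ⋃_{j=0}^{i-1} T^j([0^i])`. -/
def Ek (k : ℕ) : Set (ℕ → Bool) :=
  ⋃ (i : ℕ) (_ : k + 1 ≤ i) (j : ℕ) (_ : j < i), Tod^[j] '' cyl0 i

/-- `T^n` for `n : ℤ` (using the inverse odometer for negative `n`). -/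
def zIter (n : ℤ) (x : ℕ → Bool) : ℕ → Bool :=
  if 0 ≤ n then Tod^[n.toNat] x else TodInv^[(-n).toNat] x

/-- The factor map `Φ : X → Z = {α,β}^ℤ`, with `β = true`, `α = false`:
`Φ(x)_n = β` iff `T^n(x) ∈ A`. -/
noncomputable def Phi (x : ℕ → Bool) : ℤ → Bool := fun n =>
  @decide (zIter n x ∈ Aset) (Classical.propDecidable _)

/-- The subshift `Y`, the closure of `Φ(X)` in the full two-sided shift. -/
def Ysub : Set (ℤ → Bool) := closure (Set.range Phi)

/-- The shift map on `Z = {α,β}^ℤ`. -/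
def shiftZ (z : ℤ → Bool) : ℤ → Bool := fun n => z (n + 1)

/-- The cylinder in `Z` given by a word `w` of length `n` placed at positions `0,…,n-1`. -/
def cylZ (n : ℕ) (w : Fin n → Bool) : Set (ℤ → Bool) :=
  {z | ∀ i : Fin n, z ((i : ℕ) : ℤ) = w i}

lemma DN_succ (k : ℕ) (x : ℕ → Bool) : DN (k + 1) x = DN k x + 2 ^ k * (x k).toNat := by
  simp [DN, Finset.sum_range_succ]

lemma DN_eq_zero_iff {k : ℕ} {x : ℕ → Bool} : DN k x = 0 ↔ ∀ i < k, x i = false := by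
  simp [DN, Finset.sum_eq_zero_iff]

lemma DN_add_DN_not (k : ℕ) (x : ℕ → Bool) : DN k x + DN k (fun i => !x i) = 2 ^ k - 1 := by
  induction k with
  | zero => simp [DN]
  | succ k ih =>
    have := Nat.one_le_two_pow (n := k)
    rw [DN_succ, DN_succ, pow_succ]
    cases x k <;> simp <;> omega

lemma DN_lt_two_pow (k : ℕ) (x : ℕ → Bool) : DN k x < 2 ^ k := by
  have := DN_add_DN_not k x
  have := Nat.one_le_two_pow (n := k)
  omega

lemma DN_eq_two_pow_sub_one_iff {k : ℕ} {x : ℕ → Bool} :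
    DN k x = 2 ^ k - 1 ↔ ∀ i < k, x i = true := by
  have hsum := DN_add_DN_not k x
  have hnot : DN k (fun i => !x i) = 0 ↔ ∀ i < k, x i = true := by
    simpa using DN_eq_zero_iff (x := fun i => !x i)
  rw [← hnot]
  omega

lemma DN_Tod (k : ℕ) (x : ℕ → Bool) : DN k (Tod x) = (DN k x + 1) % 2 ^ k := by
  induction k with
  | zero => simp [DN]
  | succ k ih =>
    have hlt := DN_lt_two_pow k x
    rw [DN_succ, DN_succ, ih, pow_succ]
    by_cases h : ∀ i < k, x i = true
    · have hpos := Nat.one_le_two_pow (n := k)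
      rw [DN_eq_two_pow_sub_one_iff.mpr h, Nat.sub_add_cancel hpos, Nat.mod_self]
      simp only [Tod, if_pos h]
      cases x k
      · simp [Nat.sub_add_cancel hpos, Nat.mod_eq_of_lt (show 2 ^ k < 2 ^ k * 2 by omega)]
      · simp [show 2 ^ k - 1 + 2 ^ k + 1 = 2 ^ k * 2 by omega]
    · have hne : DN k x + 1 ≠ 2 ^ k := fun he => h (DN_eq_two_pow_sub_one_iff.mp (by omega))
      simp only [Tod, if_neg h]
      rw [Nat.mod_eq_of_lt (by omega), Nat.mod_eq_of_lt]
      · ring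
      · cases x k <;> simp <;> omega

lemma TodInv_eq_not_Tod_not (x : ℕ → Bool) : TodInv x = fun k => !Tod (fun i => !x i) k := by
  funext k
  simp only [TodInv, Tod, Bool.not_eq_true']
  split_ifs <;> simp

lemma DN_Tod_modEq (k : ℕ) (x : ℕ → Bool) : (DN k (Tod x) : ℤ) ≡ DN k x + 1 [ZMOD 2 ^ k] := by
  rw [DN_Tod]
  push_cast
  exact Int.mod_modEq _ _

lemma DN_TodInv_modEq (k : ℕ) (x : ℕ → Bool) : (DN k (TodInv x) : ℤ) ≡ DN k x - 1 [ZMOD 2 ^ k] := by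
  have hx := DN_add_DN_not k x
  have hTx := DN_add_DN_not k (Tod fun i => !x i)
  have h1 := Nat.one_le_two_pow (n := k)
  rw [TodInv_eq_not_Tod_not]
  zify [h1] at hx hTx
  calc (DN k (fun i => !Tod (fun i => !x i) i) : ℤ)
      = 2 ^ k - 1 - DN k (Tod fun i => !x i) := by linarith
    _ ≡ 2 ^ k - 1 - (DN k (fun i => !x i) + 1) [ZMOD 2 ^ k] := (DN_Tod_modEq k _).sub_left _
    _ = DN k x - 1 := by linarith

lemma DN_Tod_iterate_modEq (k m : ℕ) (x : ℕ → Bool) :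
    (DN k (Tod^[m] x) : ℤ) ≡ DN k x + m [ZMOD 2 ^ k] := by
  induction m with
  | zero => simp [Int.ModEq.refl]
  | succ m ih =>
    rw [Function.iterate_succ_apply']
    refine (DN_Tod_modEq k _).trans ?_
    simpa [add_assoc] using ih.add_right 1

lemma DN_TodInv_iterate_modEq (k m : ℕ) (x : ℕ → Bool) :
    (DN k (TodInv^[m] x) : ℤ) ≡ DN k x - m [ZMOD 2 ^ k] := by
  induction m with
  | zero => simp [Int.ModEq.refl]
  | succ m ih =>
    rw [Function.iterate_succ_apply']
    refine (DN_TodInv_modEq k _).trans ?_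
    simpa [sub_add_eq_sub_sub] using ih.sub_right 1

lemma DN_zIter_modEq (k : ℕ) (n : ℤ) (x : ℕ → Bool) :
    (DN k (zIter n x) : ℤ) ≡ DN k x + n [ZMOD 2 ^ k] := by
  unfold zIter
  split_ifs with h
  · simpa [Int.toNat_of_nonneg h] using DN_Tod_iterate_modEq k n.toNat x
  · simpa [Int.toNat_of_nonneg (by omega : 0 ≤ -n), sub_eq_add_neg] using
      DN_TodInv_iterate_modEq k (-n).toNat x

lemma DN_eq_emod_of_modEq {k : ℕ} {x : ℕ → Bool} {a : ℤ} (h : (DN k x : ℤ) ≡ a [ZMOD 2 ^ k]) :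
    (DN k x : ℤ) = a % 2 ^ k := by
  rw [← h.eq]
  exact (Int.emod_eq_of_lt (by positivity) (by exact_mod_cast DN_lt_two_pow k x)).symm

lemma DN_eq_of_modEq {k : ℕ} {x : ℕ → Bool} {m : ℕ} (hm : m < 2 ^ k)
    (h : (DN k x : ℤ) ≡ m [ZMOD 2 ^ k]) : DN k x = m := by
  have h' := DN_eq_emod_of_modEq h
  rw [Int.emod_eq_of_lt (by positivity) (by exact_mod_cast hm)] at h'
  exact_mod_cast h'

lemma DN_zIter (k : ℕ) (n : ℤ) (x : ℕ → Bool) :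
    (DN k (zIter n x) : ℤ) = (DN k x + n) % 2 ^ k :=
  DN_eq_emod_of_modEq (DN_zIter_modEq k n x)

lemma eq_of_forall_DN_eq {x x' : ℕ → Bool} (h : ∀ k, DN k x = DN k x') : x = x' := by
  funext k
  have hk := DN_succ k x
  rw [h, h, DN_succ] at hk
  have hk' : (x' k).toNat = (x k).toNat := by simpa using hk
  cases hx : x k <;> cases hx' : x' k <;> simp_all

lemma Tod_TodInv (x : ℕ → Bool) : Tod (TodInv x) = x :=
  eq_of_forall_DN_eq fun k => DN_eq_of_modEq (DN_lt_two_pow k x) <|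
    ((DN_Tod_modEq k _).trans ((DN_TodInv_modEq k x).add_right 1)).trans (by simp [Int.ModEq.refl])

lemma Tod_iterate_image_cyl0 {i j : ℕ} (hj : j < 2 ^ i) :
    Tod^[j] '' cyl0 i = {x | DN i x = j} := by
  ext x
  constructor
  · rintro ⟨x', hx', rfl⟩
    have h0 : DN i x' = 0 := DN_eq_zero_iff.mpr hx'
    exact DN_eq_of_modEq hj (by simpa [h0] using DN_Tod_iterate_modEq i j x')
  · intro hx
    refine ⟨TodInv^[j] x, DN_eq_zero_iff.mp (DN_eq_of_modEq (Nat.two_pow_pos i) ?_),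
      (Function.LeftInverse.iterate Tod_TodInv j) x⟩
    simpa [show DN i x = j from hx] using DN_TodInv_iterate_modEq i j x

lemma mem_Aset_iff (x : ℕ → Bool) : x ∈ Aset ↔ ∃ i, 5 ≤ i ∧ DN i x < i := by
  simp only [Aset, Set.mem_iUnion]
  constructor
  · rintro ⟨i, hi, j, hj, hx⟩
    rw [Tod_iterate_image_cyl0 (hj.trans i.lt_two_pow_self)] at hx
    exact ⟨i, hi, hx ▸ hj⟩
  · rintro ⟨i, hi, hlt⟩
    exact ⟨i, hi, DN i x, hlt, by rw [Tod_iterate_image_cyl0 (hlt.trans i.lt_two_pow_self)]; rfl⟩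

lemma Phi_eq_true_iff (x : ℕ → Bool) (n : ℤ) :
    Phi x n = true ↔ ∃ i, 5 ≤ i ∧ ((DN i x : ℤ) + n) % 2 ^ i < i := by
  simp only [Phi, decide_eq_true_iff, mem_Aset_iff, ← DN_zIter, Nat.cast_lt]

lemma forall_emod_add_lt_or_forall_emod_sub_lt {a M i : ℤ} {N : ℕ} (hiM : i ≤ M) (hNi : 2 * N < i)
    (ha : a % M < i) :
    (∀ t : ℕ, t ≤ N → (a + t) % M < i) ∨ (∀ t : ℕ, t ≤ N → (a - t) % M < i) := by
  have hr : 0 ≤ a % M := Int.emod_nonneg a (by omega)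
  rcases lt_or_ge (a % M + N) i with hright | hleft
  · left
    intro t ht
    rw [← Int.emod_add_emod, Int.emod_eq_of_lt (by omega) (by omega)]
    omega
  · right
    intro t ht
    rw [Int.sub_emod, Int.emod_eq_of_lt (b := M) (a := t) (by omega) (by omega),
      Int.emod_eq_of_lt (by omega) (by omega)]
    omega

lemma forall_or_forall_of_forall_le {P Q : ℕ → Prop}
    (h : ∀ N, (∀ t ≤ N, P t) ∨ (∀ t ≤ N, Q t)) : (∀ t, P t) ∨ (∀ t, Q t) := by
  by_contra! hPQ
  obtain ⟨⟨t₁, ht₁⟩, ⟨t₂, ht₂⟩⟩ := hPQ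
  rcases h (max t₁ t₂) with hP | hQ
  · exact ht₁ (hP t₁ (le_max_left _ _))
  · exact ht₂ (hQ t₂ (le_max_right _ _))

lemma Phi_eq_true_run {x : ℕ → Bool} {n : ℤ} {N : ℕ} (hn : Phi x n = true)
    (hshort : ∀ i, 5 ≤ i → i ≤ 2 * N → ¬ ((DN i x : ℤ) + n) % 2 ^ i < i) :
    (∀ t : ℕ, t ≤ N → Phi x (n + t) = true) ∨ (∀ t : ℕ, t ≤ N → Phi x (n - t) = true) := by
  obtain ⟨i, hi5, hi⟩ := (Phi_eq_true_iff x n).mp hn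
  have hNi : 2 * N < i := by
    by_contra hle
    exact hshort i hi5 (by omega) hi
  have hiM : (i : ℤ) ≤ 2 ^ i := by exact_mod_cast i.lt_two_pow_self.le
  refine (forall_emod_add_lt_or_forall_emod_sub_lt hiM (by exact_mod_cast hNi) hi).imp
    (fun h t ht => ?_) (fun h t ht => ?_)
  · exact (Phi_eq_true_iff x _).mpr ⟨i, hi5, by rw [← add_assoc]; exact h t ht⟩
  · exact (Phi_eq_true_iff x _).mpr ⟨i, hi5, by rw [← add_sub_assoc]; exact h t ht⟩

lemma continuous_DN (k : ℕ) : Continuous (DN k) := by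
  unfold DN
  fun_prop

lemma eventually_DN_eq (k : ℕ) (x : ℕ → Bool) : ∀ᶠ x' in 𝓝 x, DN k x' = DN k x := by
  simpa [nhds_discrete] using (continuous_DN k).tendsto x

lemma eventually_apply_eq {ι : Type*} (y : ι → Bool) (n : ι) : ∀ᶠ z in 𝓝 y, z n = y n := by
  simpa [nhds_discrete] using (continuous_apply n).tendsto y

section ClosureGraph

variable {X Z : Type*} [TopologicalSpace X] [TopologicalSpace Z] {f : X → Z}

lemma exists_mem_closure_graph_of_mem_closure_range [CompactSpace X] {y : Z}
    (hy : y ∈ closure (Set.range f)) : ∃ x, (x, y) ∈ closure (Set.range fun x => (x, f x)) := by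
  have hclosed : IsClosed (Prod.snd '' closure (Set.range fun x => (x, f x))) :=
    isClosedMap_snd_of_compactSpace _ isClosed_closure
  have hsub : Set.range f ⊆ Prod.snd '' closure (Set.range fun x => (x, f x)) := by
    rintro _ ⟨x, rfl⟩
    exact ⟨(x, f x), subset_closure ⟨x, rfl⟩, rfl⟩
  obtain ⟨⟨x, y'⟩, hxy, rfl⟩ := closure_minimal hsub hclosed hy
  exact ⟨x, hxy⟩

lemma exists_of_mem_closure_graph {x : X} {y : Z}
    (hxy : (x, y) ∈ closure (Set.range fun x => (x, f x))) {P : X → Prop} {Q : Z → Prop}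
    (hP : ∀ᶠ x' in 𝓝 x, P x') (hQ : ∀ᶠ z in 𝓝 y, Q z) : ∃ x', P x' ∧ Q (f x') := by
  obtain ⟨_, ⟨x', rfl⟩, hPQ⟩ :=
    ((mem_closure_iff_frequently.mp hxy).and_eventually (hP.prodMk_nhds hQ)).exists
  exact ⟨x', hPQ⟩

end ClosureGraph

section LimitPoint

variable {x : ℕ → Bool} {y : ℤ → Bool}

lemma apply_eq_true_of_Phi_eq_true (hxy : (x, y) ∈ closure (Set.range fun x => (x, Phi x)))
    {n : ℤ} (hn : Phi x n = true) : y n = true := by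
  obtain ⟨i, hi5, hi⟩ := (Phi_eq_true_iff x n).mp hn
  obtain ⟨x', hDN, hx'⟩ :=
    exists_of_mem_closure_graph hxy (eventually_DN_eq i x) (eventually_apply_eq y n)
  rw [← hx', Phi_eq_true_iff]
  exact ⟨i, hi5, hDN ▸ hi⟩

lemma tail_of_Phi_eq_false (hxy : (x, y) ∈ closure (Set.range fun x => (x, Phi x))) {n : ℤ}
    (hxn : Phi x n = false) (hyn : y n = true) :
    (∀ t : ℕ, y (n + t) = true) ∨ (∀ t : ℕ, y (n - t) = true) := by
  refine forall_or_forall_of_forall_le fun N => ?_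
  obtain ⟨x', hDN, hx'⟩ := exists_of_mem_closure_graph hxy
    ((eventually_all_finset (Finset.range (2 * N + 1))).mpr fun i _ => eventually_DN_eq i x)
    ((eventually_all_finset (Finset.range (N + 1))).mpr fun t _ =>
      (eventually_apply_eq y (n + t)).and (eventually_apply_eq y (n - t)))
  have hshort : ∀ i, 5 ≤ i → i ≤ 2 * N → ¬ ((DN i x' : ℤ) + n) % 2 ^ i < i := by
    intro i hi5 hiN hi
    rw [hDN i (Finset.mem_range.mpr (by omega))] at hi
    exact Bool.false_ne_true (hxn ▸ (Phi_eq_true_iff x n).mpr ⟨i, hi5, hi⟩)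
  have hx'n : Phi x' n = true := by simpa [hyn] using (hx' 0 (by simp)).1
  refine (Phi_eq_true_run hx'n hshort).imp (fun h t ht => ?_) (fun h t ht => ?_)
  · rw [← (hx' t (Finset.mem_range.mpr (by omega))).1, h t ht]
  · rw [← (hx' t (Finset.mem_range.mpr (by omega))).2, h t ht]

end LimitPoint

/-- if `y ∈ Y` has no right tail and no left tail of all `β`'s, then
`y ∈ Φ(X)`. -/
theorem stmt13 (y : ℤ → Bool) (hy : y ∈ Ysub)
    (hfwd : ∀ i : ℤ, 0 < i → ¬ ∀ n ≥ i, y n = true)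
    (hbwd : ∀ j : ℤ, j < 0 → ¬ ∀ n ≤ j, y n = true) :
    y ∈ Set.range Phi := by
  obtain ⟨x, hxy⟩ := exists_mem_closure_graph_of_mem_closure_range hy
  refine ⟨x, funext fun n => ?_⟩
  cases hxn : Phi x n with
  | true => exact (apply_eq_true_of_Phi_eq_true hxy hxn).symm
  | false =>
    by_contra hyn
    rcases tail_of_Phi_eq_false hxy hxn (by simpa using Ne.symm hyn) with hright | hleft
    · refine hfwd (max n 1) (by omega) fun k hk => ?_
      have h := hright (k - n).toNat
      rwa [show n + ((k - n).toNat : ℤ) = k by omega] at h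
    · refine hbwd (min n (-1)) (by omega) fun k hk => ?_
      have h := hleft (n - k).toNat
      rwa [show n - ((n - k).toNat : ℤ) = k by omega] at h
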